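/- arXiv:2201.07446 — 2 statements merged into one kernel-verified Lean document; each statement's English description precedes it below -/
import Mathlib

section
/- For λ ∈ (1/3, 1/2), the set E_λ = C_λ − C_λ equals the full interval [-1, 1], where C_λ = {(1-λ)·∑_{n≥1} i_n·λ^{n-1} : i_n ∈ {0,1}}. -/
open scoped Pointwise

/-- `PiFun i λ = (1-λ) ∑_{n≥0} i_n λ^n`, the series Π from the paper (0-based indexing). -/
noncomputable def PiFun (i : ℕ → ℝ) (l : ℝ) : ℝ := (1 - l) * ∑' n : ℕ, i n * l ^ n

/-- `i` is a sequence over the alphabet `{-1,0,1}`. -/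
def IsCoding (i : ℕ → ℝ) : Prop := ∀ n, i n = -1 ∨ i n = 0 ∨ i n = 1

/-- Strict lexicographic order on sequences. -/
def LexLt (i j : ℕ → ℝ) : Prop := ∃ m, (∀ n, n < m → i n = j n) ∧ i m < j m

/-- Non-strict lexicographic order on sequences. -/
def LexLe (i j : ℕ → ℝ) : Prop := LexLt i j ∨ i = j

-- `rho i j = 3^{-k}` where `k` is the first (0-based) index at which the sequences differ
-- (this equals `3^{1-k}` for 1-based indexing as in the paper).
open Classical in
noncomputable def rho (i j : ℕ → ℝ) : ℝ :=
  if i = j then 0 else (3 : ℝ) ^ (-((sInf {n : ℕ | i n ≠ j n} : ℕ) : ℤ))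

/-- The middle-`(1-2λ)` Cantor set `C_λ`. -/
def Cset (l : ℝ) : Set ℝ :=
  {x | ∃ i : ℕ → ℝ, (∀ n, i n = 0 ∨ i n = 1) ∧ x = (1 - l) * ∑' n : ℕ, i n * l ^ n}

/-- `Λ(t) = {λ ∈ (0,1/3] : t ∈ C_λ - C_λ}`. -/
def Lam (t : ℝ) : Set ℝ := {l | l ∈ Set.Ioc (0 : ℝ) (1/3) ∧ t ∈ Cset l - Cset l}

/-!
Writing `x - y` digitwise, `C_λ - C_λ` is the set of sums `(1-λ) ∑ iₙ λⁿ` with digits in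
`{-1, 0, 1}`; these lie in `[-1, 1]` because `(1-λ) ∑ λⁿ = 1`. Conversely, for `λ ≥ 1/3` the
greedy expansion works: the map `s ↦ (s - (1-λ) d(s)) / λ`, with `d(s) ∈ {-1, 0, 1}` chosen by
comparing `s` with `±λ`, sends `[-1, 1]` into itself, so after `N` steps the remainder is
`λᴺ` times a number of modulus at most `1`.
-/

section Coding

variable {l : ℝ}

lemma IsCoding.abs_le_one {i : ℕ → ℝ} (hi : IsCoding i) (n : ℕ) : |i n| ≤ 1 := by
  rcases hi n with h | h | h <;> simp [h]

lemma summable_mul_pow_of_abs_le_one (hl₀ : 0 ≤ l) (hl₁ : l < 1) {i : ℕ → ℝ}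
    (hi : ∀ n, |i n| ≤ 1) : Summable fun n => i n * l ^ n := by
  refine .of_norm_bounded (summable_geometric_of_lt_one hl₀ hl₁) fun n => ?_
  rw [norm_mul, norm_pow, Real.norm_eq_abs, Real.norm_eq_abs, abs_of_nonneg hl₀]
  exact mul_le_of_le_one_left (pow_nonneg hl₀ n) (hi n)

lemma abs_PiFun_le_one (hl₀ : 0 ≤ l) (hl₁ : l < 1) {i : ℕ → ℝ} (hi : ∀ n, |i n| ≤ 1) :
    |PiFun i l| ≤ 1 := by
  have hs := summable_mul_pow_of_abs_le_one hl₀ hl₁ hi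
  have hgeom := summable_geometric_of_lt_one hl₀ hl₁
  have hsum : |∑' n, i n * l ^ n| ≤ ∑' n : ℕ, l ^ n := by
    refine (norm_tsum_le_tsum_norm hs.norm).trans (hs.norm.tsum_le_tsum (fun n => ?_) hgeom)
    rw [Real.norm_eq_abs, abs_mul, abs_pow, abs_of_nonneg hl₀]
    exact mul_le_of_le_one_left (pow_nonneg hl₀ n) (hi n)
  rw [tsum_geometric_of_lt_one hl₀ hl₁] at hsum
  calc |PiFun i l| = (1 - l) * |∑' n, i n * l ^ n| := by
        rw [PiFun, abs_mul, abs_of_pos (sub_pos.mpr hl₁)]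
    _ ≤ (1 - l) * (1 - l)⁻¹ := by gcongr
    _ = 1 := mul_inv_cancel₀ (sub_pos.mpr hl₁).ne'

lemma PiFun_sub (hl₀ : 0 ≤ l) (hl₁ : l < 1) {a b : ℕ → ℝ} (ha : ∀ n, |a n| ≤ 1)
    (hb : ∀ n, |b n| ≤ 1) : PiFun a l - PiFun b l = PiFun (a - b) l := by
  rw [PiFun, PiFun, PiFun, ← mul_sub, ← (summable_mul_pow_of_abs_le_one hl₀ hl₁ ha).tsum_sub
    (summable_mul_pow_of_abs_le_one hl₀ hl₁ hb)]
  simp only [Pi.sub_apply, sub_mul]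

lemma abs_le_one_of_zero_or_one {a : ℕ → ℝ} (ha : ∀ n, a n = 0 ∨ a n = 1) (n : ℕ) :
    |a n| ≤ 1 := by
  rcases ha n with h | h <;> simp [h]

theorem Cset_sub_Cset (hl₀ : 0 ≤ l) (hl₁ : l < 1) :
    Cset l - Cset l = {x | ∃ i, IsCoding i ∧ x = PiFun i l} := by
  ext x
  constructor
  · rintro ⟨_, ⟨a, ha, rfl⟩, _, ⟨b, hb, rfl⟩, rfl⟩
    refine ⟨a - b, fun n => ?_, ?_⟩
    · rcases ha n with h | h <;> rcases hb n with h' | h' <;> simp [h, h']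
    · exact PiFun_sub hl₀ hl₁ (abs_le_one_of_zero_or_one ha) (abs_le_one_of_zero_or_one hb)
  · rintro ⟨i, hi, rfl⟩
    have hpos : ∀ n, i⁺ n = 0 ∨ i⁺ n = 1 := fun n => by
      rcases hi n with h | h | h <;> simp [h]
    have hneg : ∀ n, i⁻ n = 0 ∨ i⁻ n = 1 := fun n => by
      rcases hi n with h | h | h <;> simp [h]
    refine ⟨_, ⟨i⁺, hpos, rfl⟩, _, ⟨i⁻, hneg, rfl⟩, ?_⟩
    change PiFun i⁺ l - PiFun i⁻ l = PiFun i l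
    rw [PiFun_sub hl₀ hl₁ (abs_le_one_of_zero_or_one hpos) (abs_le_one_of_zero_or_one hneg),
      posPart_sub_negPart]

end Coding

namespace GreedyExpansion

variable {l : ℝ}

noncomputable def digit (l s : ℝ) : ℝ := if s < -l then -1 else if s ≤ l then 0 else 1

noncomputable def remainder (l t : ℝ) : ℕ → ℝ
  | 0 => t
  | n + 1 => (remainder l t n - (1 - l) * digit l (remainder l t n)) / l

lemma isCoding_digit (l t : ℝ) : IsCoding fun n => digit l (remainder l t n) := fun n => by
  simp only [digit]; split_ifs <;> simp

-- For `s < -λ` the new remainder `(s + 1 - λ) / λ` is at most `1` iff `s ≤ 2λ - 1`, which holds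
-- on the whole range `s < -λ` exactly when `λ ≥ 1/3`.
lemma abs_step_le_one (hl : 1 / 3 ≤ l) {s : ℝ} (hs : |s| ≤ 1) :
    |(s - (1 - l) * digit l s) / l| ≤ 1 := by
  have hl₀ : 0 < l := by linarith
  rw [abs_le] at hs ⊢
  rw [div_le_one hl₀, le_div_iff₀ hl₀]
  unfold digit
  split_ifs <;> constructor <;> nlinarith

lemma abs_remainder_le_one (hl : 1 / 3 ≤ l) {t : ℝ} (ht : |t| ≤ 1) (n : ℕ) :
    |remainder l t n| ≤ 1 := by
  induction n with
  | zero => exact ht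
  | succ n ih => exact abs_step_le_one hl ih

lemma eq_partialSum_add_remainder (hl : l ≠ 0) (t : ℝ) (N : ℕ) :
    t = (1 - l) * ∑ k ∈ Finset.range N, digit l (remainder l t k) * l ^ k
      + l ^ N * remainder l t N := by
  induction N with
  | zero => simp [remainder]
  | succ N ih =>
    have hstep : l ^ (N + 1) * remainder l t (N + 1)
        = l ^ N * (remainder l t N - (1 - l) * digit l (remainder l t N)) := by
      rw [remainder, pow_succ]
      field_simp
    rw [Finset.sum_range_succ, hstep]
    linear_combination ih

theorem eq_PiFun_digit (hl : 1 / 3 ≤ l) (hl₁ : l < 1) {t : ℝ} (ht : |t| ≤ 1) :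
    t = PiFun (fun n => digit l (remainder l t n)) l := by
  have hl₀ : 0 < l := by linarith
  have hs := summable_mul_pow_of_abs_le_one hl₀.le hl₁ (isCoding_digit l t).abs_le_one
  refine tendsto_nhds_unique ?_ (hs.hasSum.tendsto_sum_nat.const_mul (1 - l))
  rw [tendsto_iff_dist_tendsto_zero]
  refine squeeze_zero (fun _ => dist_nonneg) (fun N => ?_)
    (tendsto_pow_atTop_nhds_zero_of_lt_one hl₀.le hl₁)
  rw [Real.dist_eq, abs_sub_comm,
    sub_eq_iff_eq_add'.mpr (eq_partialSum_add_remainder hl₀.ne' t N),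
    abs_mul, abs_pow, abs_of_pos hl₀]
  exact mul_le_of_le_one_right (pow_nonneg hl₀.le N) (abs_remainder_le_one hl ht N)

end GreedyExpansion

theorem stmt9 (l : ℝ) (hl : l ∈ Set.Ioo (1/3 : ℝ) (1/2)) :
    Cset l - Cset l = Set.Icc (-1 : ℝ) 1 := by
  obtain ⟨hl_gt, hl_lt⟩ := hl
  have hl₀ : 0 ≤ l := by linarith
  have hl₁ : l < 1 := by linarith
  rw [Cset_sub_Cset hl₀ hl₁]
  ext t
  constructor
  · rintro ⟨i, hi, rfl⟩
    exact abs_le.mp (abs_PiFun_le_one hl₀ hl₁ hi.abs_le_one)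
  · intro ht
    exact ⟨_, GreedyExpansion.isCoding_digit l t,
      GreedyExpansion.eq_PiFun_digit hl_gt.le hl₁ (abs_le.mpr ht)⟩
end

section
/- Let t ∈ (4/27, 1/3), let θ ∈ (t, 1/3), and suppose λ₁, λ₂ ∈ (0, θ] and (i_n), (j_n) ∈ {-1,0,1}^ℕ satisfy 01(-1)0^∞ ≼ (i_n), (j_n) ≼ 01^∞ (lexicographically), Π((i_n), λ₁) = t = Π((j_n), λ₂), and λ₁ < λ₂. Then (i_n) ≻ (j_n) lexicographically; i.e., the coding map is strictly decreasing there. -/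
open scoped Pointwise

/-! Write `σᵏ i` for `n ↦ i (n + k)`. For `λ ≤ 1/3`, `Π(·, λ)` is monotone for the lexicographic
order: raising the digit at position `m` by one gains `(1 - λ)λᵐ`, at least the `2λᵐ⁺¹` that the
later digits can lose. So `j ≽ i` would give `t = Π(j, λ₂) ≥ Π(i, λ₂) > Π(i, λ₁) = t`, once
`Π(i, ·)` is known to be strictly increasing.

Since `i` begins with `0 1 i₂`, `Π(i, λ) = (1 - λ)λ + (1 - λ)λ² i₂ + λ³ Π(σ³ i, λ)`, and for each
value of `i₂` the polynomial part increases strictly on `[0, 1/3]`. As the weights `(1 - λ)λⁿ`,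
`n ≥ 1`, increase on `[0, 1/2]`, `λᵏ Π(c, λ)` is nondecreasing for `k ≥ 1` and nonnegative digits
`c`; with `c = 1 + σ³ i` this bounds what the tail can lose. When `i₂ = -1`, the lower bound
`01(-1)0^∞` makes `σ³ i` lexicographically nonnegative, and then `λ³ Π(σ³ i, λ)` is itself
nondecreasing, because `(1 - 2λ)λᵏ` increases on `[0, 1/3]` for `k ≥ 2`. -/

section

variable {s i j x y : ℕ → ℝ} {a b l l₁ l₂ : ℝ}

lemma lexLt_trichotomy (i j : ℕ → ℝ) : LexLt i j ∨ i = j ∨ LexLt j i := by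
  rcases lt_trichotomy (toLex i) (toLex j) with h | h | h
  · exact Or.inl h
  · exact Or.inr (Or.inl (toLex_inj.1 h))
  · exact Or.inr (Or.inr h)

lemma lexLt_iff_head_tail :
    LexLt x y ↔ x 0 < y 0 ∨ x 0 = y 0 ∧ LexLt (fun n => x (n + 1)) (fun n => y (n + 1)) := by
  constructor
  · rintro ⟨_ | m, hpre, hm⟩
    · exact Or.inl hm
    · exact Or.inr ⟨hpre 0 m.succ_pos, m, fun n hn => hpre (n + 1) (by omega), hm⟩
  · rintro (h | ⟨h0, m, hpre, hm⟩)
    · exact ⟨0, by simp, h⟩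
    · refine ⟨m + 1, fun n hn => ?_, hm⟩
      cases n with
      | zero => exact h0
      | succ n => exact hpre n (by omega)

lemma lexLe_iff_head_tail :
    LexLe x y ↔ x 0 < y 0 ∨ x 0 = y 0 ∧ LexLe (fun n => x (n + 1)) (fun n => y (n + 1)) := by
  have hext : x = y ↔ x 0 = y 0 ∧ (fun n => x (n + 1)) = fun n => y (n + 1) := by
    refine ⟨fun h => h ▸ ⟨rfl, rfl⟩, fun ⟨h0, h⟩ => funext fun n => ?_⟩
    cases n with
    | zero => exact h0
    | succ n => exact congrFun h n
  rw [LexLe, LexLe, lexLt_iff_head_tail, hext]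
  tauto

lemma IsCoding.abs_le_one_s18 (hs : IsCoding s) (n : ℕ) : |s n| ≤ 1 := by
  rcases hs n with h | h | h <;> simp [h]

lemma IsCoding.shift (hs : IsCoding s) (k : ℕ) : IsCoding fun n => s (n + k) :=
  fun n => hs (n + k)

lemma IsCoding.eq_one_of_pos (hs : IsCoding s) {n : ℕ} (h : 0 < s n) : s n = 1 := by
  rcases hs n with h' | h' | h' <;> rw [h'] at h ⊢ <;> norm_num at h

lemma IsCoding.one_le_sub_of_lt (hs : IsCoding s) (hx : IsCoding x) {n : ℕ} (h : s n < x n) :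
    1 ≤ x n - s n := by
  rcases hs n with h' | h' | h' <;> rcases hx n with h'' | h'' | h'' <;> rw [h', h''] at h ⊢ <;>
    linarith

lemma summable_mul_pow_of_abs_le {C : ℝ} (hs : ∀ n, |s n| ≤ C) (h0 : 0 ≤ l) (h1 : l < 1) :
    Summable fun n => s n * l ^ n :=
  Summable.of_norm_bounded ((summable_geometric_of_lt_one h0 h1).mul_left C) fun n => by
    rw [norm_mul, norm_pow, Real.norm_of_nonneg h0, Real.norm_eq_abs]
    exact mul_le_mul_of_nonneg_right (hs n) (by positivity)

lemma IsCoding.summable_mul_pow (hs : IsCoding s) (h0 : 0 ≤ l) (h1 : l < 1) :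
    Summable fun n => s n * l ^ n :=
  summable_mul_pow_of_abs_le hs.abs_le_one_s18 h0 h1

lemma IsCoding.abs_PiFun_le_one (hs : IsCoding s) (h0 : 0 ≤ l) (h1 : l < 1) :
    |PiFun s l| ≤ 1 := by
  have hgeom := summable_geometric_of_lt_one h0 h1
  have hsum : |∑' n, s n * l ^ n| ≤ ∑' n : ℕ, l ^ n := by
    refine (norm_tsum_le_tsum_norm (hs.summable_mul_pow h0 h1).norm).trans
      ((hs.summable_mul_pow h0 h1).norm.tsum_le_tsum (fun n => ?_) hgeom)
    rw [norm_mul, norm_pow, Real.norm_of_nonneg h0, Real.norm_eq_abs]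
    exact mul_le_of_le_one_left (by positivity) (hs.abs_le_one_s18 n)
  rw [tsum_geometric_of_lt_one h0 h1] at hsum
  rw [PiFun, abs_mul, abs_of_pos (sub_pos.2 h1)]
  calc (1 - l) * |∑' n, s n * l ^ n| ≤ (1 - l) * (1 - l)⁻¹ := by gcongr
    _ = 1 := mul_inv_cancel₀ (sub_pos.2 h1).ne'

lemma PiFun_eq_head_add (hs : Summable fun n => s n * l ^ n) :
    PiFun s l = (1 - l) * s 0 + l * PiFun (fun n => s (n + 1)) l := by
  simp only [PiFun, hs.tsum_eq_zero_add, pow_succ, ← mul_assoc, tsum_mul_right]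
  ring

lemma PiFun_eq_pow_mul_of_eq_zero (hs : IsCoding s) (h0 : 0 ≤ l) (h1 : l < 1) {m : ℕ}
    (hz : ∀ n < m, s n = 0) : PiFun s l = l ^ m * PiFun (fun n => s (n + m)) l := by
  induction m generalizing s with
  | zero => simp
  | succ m ih =>
    rw [PiFun_eq_head_add (hs.summable_mul_pow h0 h1), hz 0 m.succ_pos,
      ih (hs.shift 1) fun n hn => hz (n + 1) (by omega)]
    simp only [add_assoc]
    ring

theorem IsCoding.PiFun_le_of_lexLt (hi : IsCoding i) (hj : IsCoding j) (hij : LexLt i j)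
    (h0 : 0 ≤ l) (h3 : l ≤ 1 / 3) : PiFun i l ≤ PiFun j l := by
  have h1 : l < 1 := by linarith
  obtain ⟨m, hpre, hm⟩ := hij
  induction m generalizing i j with
  | zero =>
    rw [PiFun_eq_head_add (hi.summable_mul_pow h0 h1),
      PiFun_eq_head_add (hj.summable_mul_pow h0 h1)]
    have hgap : 1 - l ≤ (1 - l) * (j 0 - i 0) :=
      le_mul_of_one_le_right (by linarith) (hi.one_le_sub_of_lt hj hm)
    have hi' := abs_le.1 ((hi.shift 1).abs_PiFun_le_one h0 h1)
    have hj' := abs_le.1 ((hj.shift 1).abs_PiFun_le_one h0 h1)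
    nlinarith
  | succ m ih =>
    rw [PiFun_eq_head_add (hi.summable_mul_pow h0 h1),
      PiFun_eq_head_add (hj.summable_mul_pow h0 h1), hpre 0 m.succ_pos]
    gcongr
    exact ih (hi.shift 1) (hj.shift 1) (fun n hn => hpre (n + 1) (by omega)) hm

lemma one_sub_mul_pow_le_of_add_le_one {k : ℕ} (hk : 1 ≤ k) (ha : 0 ≤ a) (hab : a ≤ b)
    (h : a + b ≤ 1) : (1 - a) * a ^ k ≤ (1 - b) * b ^ k := by
  obtain ⟨m, rfl⟩ := Nat.exists_eq_add_of_le' hk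
  have hquad : (1 - a) * a ≤ (1 - b) * b := by nlinarith
  calc (1 - a) * a ^ (m + 1) = a ^ m * ((1 - a) * a) := by ring
    _ ≤ b ^ m * ((1 - b) * b) :=
      mul_le_mul (pow_le_pow_left₀ ha hab m) hquad (by nlinarith) (pow_nonneg (ha.trans hab) m)
    _ = (1 - b) * b ^ (m + 1) := by ring

lemma one_sub_two_mul_mul_pow_le {k : ℕ} (hk : 2 ≤ k) (ha : 0 ≤ a) (hab : a ≤ b)
    (hb : b ≤ 1 / 3) : (1 - 2 * a) * a ^ k ≤ (1 - 2 * b) * b ^ k := by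
  obtain ⟨m, rfl⟩ := Nat.exists_eq_add_of_le' hk
  have hcubic : (1 - 2 * a) * a ^ 2 ≤ (1 - 2 * b) * b ^ 2 := by
    nlinarith [mul_nonneg ha (sub_nonneg.2 hab), mul_nonneg (sub_nonneg.2 hab) (sub_nonneg.2 hb)]
  calc (1 - 2 * a) * a ^ (m + 2) = a ^ m * ((1 - 2 * a) * a ^ 2) := by ring
    _ ≤ b ^ m * ((1 - 2 * b) * b ^ 2) :=
      mul_le_mul (pow_le_pow_left₀ ha hab m) hcubic (by nlinarith) (pow_nonneg (ha.trans hab) m)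
    _ = (1 - 2 * b) * b ^ (m + 2) := by ring

lemma pow_mul_PiFun_le_of_nonneg {c : ℕ → ℝ} {C : ℝ} (hc : ∀ n, 0 ≤ c n) (hC : ∀ n, c n ≤ C)
    {k : ℕ} (hk : 1 ≤ k) (h0 : 0 ≤ l₁) (h12 : l₁ ≤ l₂) (h : l₁ + l₂ < 1) :
    l₁ ^ k * PiFun c l₁ ≤ l₂ ^ k * PiFun c l₂ := by
  have hC' : ∀ n, |c n| ≤ C := fun n => by rw [abs_of_nonneg (hc n)]; exact hC n
  have hseries : ∀ l, 0 ≤ l → l < 1 → l ^ k * PiFun c l = ∑' n, c n * ((1 - l) * l ^ (n + k)) ∧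
      Summable fun n => c n * ((1 - l) * l ^ (n + k)) := fun l hl0 hl1 => by
    have hterm : ∀ n, c n * ((1 - l) * l ^ (n + k)) = l ^ k * (1 - l) * (c n * l ^ n) :=
      fun n => by ring
    simp only [hterm, PiFun, tsum_mul_left]
    exact ⟨by ring, (summable_mul_pow_of_abs_le hC' hl0 hl1).mul_left _⟩
  obtain ⟨he₁, hs₁⟩ := hseries l₁ h0 (by linarith)
  obtain ⟨he₂, hs₂⟩ := hseries l₂ (by linarith) (by linarith)
  rw [he₁, he₂]
  refine hs₁.tsum_le_tsum (fun n => ?_) hs₂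
  exact mul_le_mul_of_nonneg_left
    (one_sub_mul_pow_le_of_add_le_one (by omega) h0 h12 h.le) (hc n)

lemma PiFun_one_add (hs : Summable fun n => s n * l ^ n) (h0 : 0 ≤ l) (h1 : l < 1) :
    PiFun (fun n => 1 + s n) l = 1 + PiFun s l := by
  have hgeom := summable_geometric_of_lt_one h0 h1
  simp only [PiFun, add_mul, one_mul, hgeom.tsum_add hs, tsum_geometric_of_lt_one h0 h1, mul_add]
  rw [mul_inv_cancel₀ (sub_pos.2 h1).ne']

lemma IsCoding.pow_mul_one_add_PiFun_le (hs : IsCoding s) {k : ℕ} (hk : 1 ≤ k) (h0 : 0 ≤ l₁)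
    (h12 : l₁ ≤ l₂) (h : l₁ + l₂ < 1) :
    l₁ ^ k * (1 + PiFun s l₁) ≤ l₂ ^ k * (1 + PiFun s l₂) := by
  rw [← PiFun_one_add (hs.summable_mul_pow h0 (by linarith)) h0 (by linarith),
    ← PiFun_one_add (hs.summable_mul_pow (by linarith) (by linarith)) (by linarith) (by linarith)]
  refine pow_mul_PiFun_le_of_nonneg (C := 2) (fun n => ?_) (fun n => ?_) hk h0 h12 h <;>
    linarith [abs_le.1 (hs.abs_le_one_s18 n)]

lemma IsCoding.pow_mul_PiFun_le_of_head_eq_one (hs : IsCoding s) (hs0 : s 0 = 1) {k : ℕ}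
    (hk : 2 ≤ k) (h0 : 0 ≤ l₁) (h12 : l₁ ≤ l₂) (h3 : l₂ ≤ 1 / 3) :
    l₁ ^ k * PiFun s l₁ ≤ l₂ ^ k * PiFun s l₂ := by
  have hsplit : ∀ l, 0 ≤ l → l < 1 → l ^ k * PiFun s l =
      (1 - 2 * l) * l ^ k + l ^ (k + 1) * (1 + PiFun (fun n => s (n + 1)) l) := fun l hl0 hl1 => by
    rw [PiFun_eq_head_add (hs.summable_mul_pow hl0 hl1), hs0]
    ring
  rw [hsplit l₁ h0 (by linarith), hsplit l₂ (by linarith) (by linarith)]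
  gcongr ?_ + ?_
  · exact one_sub_two_mul_mul_pow_le hk h0 h12 h3
  · exact (hs.shift 1).pow_mul_one_add_PiFun_le (by omega) h0 h12 (by linarith)

lemma IsCoding.pow_mul_PiFun_le_of_lexLe_zero (hs : IsCoding s) (hpos : LexLe 0 s) {k : ℕ}
    (hk : 2 ≤ k) (h0 : 0 ≤ l₁) (h12 : l₁ ≤ l₂) (h3 : l₂ ≤ 1 / 3) :
    l₁ ^ k * PiFun s l₁ ≤ l₂ ^ k * PiFun s l₂ := by
  rcases hpos with ⟨m, hz, hm⟩ | rfl
  · have hz' : ∀ n < m, s n = 0 := fun n hn => (hz n hn).symm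
    have hlead := (hs.shift m).pow_mul_PiFun_le_of_head_eq_one (by simpa using hs.eq_one_of_pos hm)
      (k := k + m) (by omega) h0 h12 h3
    rw [PiFun_eq_pow_mul_of_eq_zero hs h0 (by linarith) hz',
      PiFun_eq_pow_mul_of_eq_zero hs (by linarith) (by linarith) hz']
    simpa only [pow_add, mul_assoc] using hlead
  · simp [PiFun]

lemma prefix_of_lexLe_of_lexLe
    (hlo : LexLe (fun n => if n = 0 then (0 : ℝ) else if n = 1 then 1 else if n = 2 then -1 else 0) i)
    (hhi : LexLe i (fun n => if n = 0 then (0 : ℝ) else 1)) :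
    i 0 = 0 ∧ i 1 = 1 ∧ (i 2 = -1 → LexLe 0 fun n => i (n + 3)) := by
  rw [lexLe_iff_head_tail, lexLe_iff_head_tail, lexLe_iff_head_tail] at hlo
  rw [lexLe_iff_head_tail, lexLe_iff_head_tail] at hhi
  simp only [↓reduceIte, zero_add, one_ne_zero, Nat.reduceAdd, OfNat.ofNat_ne_zero,
    OfNat.ofNat_ne_one, Nat.add_eq_zero_iff, and_false, and_self, Nat.add_eq_right,
    Nat.reduceEqDiff] at hlo hhi
  have h0 : i 0 = 0 := by
    rcases hlo with h | ⟨h, -⟩ <;> rcases hhi with h' | ⟨h', -⟩ <;> linarith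
  rcases hlo with h | ⟨-, hlo⟩
  · linarith
  have h1 : i 1 = 1 := by
    rcases hlo with h | ⟨h, -⟩ <;> rcases hhi with h' | ⟨-, h' | ⟨h', -⟩⟩ <;> linarith
  refine ⟨h0, h1, fun h2 => ?_⟩
  rcases hlo with h | ⟨-, h | ⟨-, hlo⟩⟩
  · linarith
  · linarith
  · exact hlo

theorem IsCoding.PiFun_lt_PiFun (hi : IsCoding i)
    (hlo : LexLe (fun n => if n = 0 then (0 : ℝ) else if n = 1 then 1 else if n = 2 then -1 else 0) i)
    (hhi : LexLe i (fun n => if n = 0 then (0 : ℝ) else 1))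
    (h0 : 0 ≤ l₁) (h12 : l₁ < l₂) (h3 : l₂ ≤ 1 / 3) :
    PiFun i l₁ < PiFun i l₂ := by
  obtain ⟨hi0, hi1, hneg⟩ := prefix_of_lexLe_of_lexLe hlo hhi
  have hexpand : ∀ l, 0 ≤ l → l < 1 → PiFun i l =
      (1 - l) * l + (1 - l) * l ^ 2 * i 2 + l ^ 3 * PiFun (fun n => i (n + 3)) l :=
    fun l hl0 hl1 => by
      rw [PiFun_eq_head_add (hi.summable_mul_pow hl0 hl1),
        PiFun_eq_head_add ((hi.shift 1).summable_mul_pow hl0 hl1),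
        PiFun_eq_head_add ((hi.shift 2).summable_mul_pow hl0 hl1), hi0, hi1]
      ring_nf
  rw [hexpand l₁ h0 (by linarith), hexpand l₂ (by linarith) (by linarith)]
  have htail := (hi.shift 3).pow_mul_one_add_PiFun_le (k := 3) (by norm_num) h0 h12.le
    (by linarith)
  have hquad : l₁ ^ 2 + l₁ * l₂ + l₂ ^ 2 < 1 / 3 := by nlinarith
  rcases hi 2 with h2 | h2 | h2 <;> rw [h2]
  · have hnonneg := (hi.shift 3).pow_mul_PiFun_le_of_lexLe_zero (hneg h2) (k := 3) (by norm_num)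
      h0 h12.le h3
    nlinarith [mul_pos (sub_pos.2 h12) (by linarith : (0 : ℝ) < 1 / 3 - l₁)]
  · have hpos : (0 : ℝ) < 1 - l₁ - l₂ - (l₁ ^ 2 + l₁ * l₂ + l₂ ^ 2) := by linarith
    nlinarith [mul_pos (sub_pos.2 h12) hpos]
  · have hpos : (0 : ℝ) < 1 - 2 * (l₁ ^ 2 + l₁ * l₂ + l₂ ^ 2) := by linarith
    nlinarith [mul_pos (sub_pos.2 h12) hpos]

end

theorem stmt18_general (t θ : ℝ) (hθ : θ ∈ Set.Ioo t (1/3))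
    (l₁ l₂ : ℝ) (h1 : l₁ ∈ Set.Ioc (0 : ℝ) θ) (h2 : l₂ ∈ Set.Ioc (0 : ℝ) θ)
    (i j : ℕ → ℝ) (hi : IsCoding i) (hj : IsCoding j)
    (hia : LexLe (fun n => if n = 0 then (0 : ℝ) else if n = 1 then 1 else if n = 2 then -1 else 0) i)
    (hib : LexLe i (fun n => if n = 0 then (0 : ℝ) else 1))
    (hit : PiFun i l₁ = t) (hjt : PiFun j l₂ = t) (hlt : l₁ < l₂) :
    LexLt j i := by
  have hl₂ : l₂ ≤ 1 / 3 := h2.2.trans hθ.2.le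
  have hmono := hi.PiFun_lt_PiFun hia hib h1.1.le hlt hl₂
  rcases lexLt_trichotomy i j with hij | rfl | hji
  · linarith [hi.PiFun_le_of_lexLt hj hij h2.1.le hl₂]
  · linarith
  · exact hji

theorem stmt18 (t θ : ℝ) (ht : t ∈ Set.Ioo (4/27 : ℝ) (1/3)) (hθ : θ ∈ Set.Ioo t (1/3))
    (l₁ l₂ : ℝ) (h1 : l₁ ∈ Set.Ioc (0 : ℝ) θ) (h2 : l₂ ∈ Set.Ioc (0 : ℝ) θ)
    (i j : ℕ → ℝ) (hi : IsCoding i) (hj : IsCoding j)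
    (hia : LexLe (fun n => if n = 0 then (0 : ℝ) else if n = 1 then 1 else if n = 2 then -1 else 0) i)
    (hib : LexLe i (fun n => if n = 0 then (0 : ℝ) else 1))
    (hja : LexLe (fun n => if n = 0 then (0 : ℝ) else if n = 1 then 1 else if n = 2 then -1 else 0) j)
    (hjb : LexLe j (fun n => if n = 0 then (0 : ℝ) else 1))
    (hit : PiFun i l₁ = t) (hjt : PiFun j l₂ = t) (hlt : l₁ < l₂) :
    LexLt j i :=
  stmt18_general t θ hθ l₁ l₂ h1 h2 i j hi hj hia hib hit hjt hlt
end
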